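/- Let m ≥ 2 be an integer and define V(r) := (m/r²)(m − 2h₃(r)) for r > 0, where h₃(r) = (r^m−r^{−m})/(r^m+r^{−m}). Then for all r > 0: (m+1)² ≥ 1 + r²V(r) ≥ (m−1)² ≥ 1, and 1 − r²·(d/dr)(rV(r)) = 1 + m(m − 2h₃(r) + 2m h₁(r)²) ≥ 1 + m(m−2) ≥ 1, where h₁(r) = 2/(r^m+r^{−m}). In particular the potential (1 + m² − 2m h₃(r))/r² = 1/r² + V(r) from the linearized Schrödinger map problem satisfies the positivity and repulsivity conditions with ν = 1. -/

import Mathlib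

open MeasureTheory Set Real Filter
open scoped ENNReal

noncomputable section

abbrev V3 := Fin 3 → ℝ
abbrev V2 := Fin 2 → ℝ

/-- cross product in ℝ³ -/
def cross3 (a b : V3) : V3 :=
  ![a 1 * b 2 - a 2 * b 1, a 2 * b 0 - a 0 * b 2, a 0 * b 1 - a 1 * b 0]

/-- dot product in ℝ³ -/
def dot3 (a b : V3) : ℝ := a 0 * b 0 + a 1 * b 1 + a 2 * b 2

/-- squared euclidean norm in ℝ³ -/
def nsq3 (a : V3) : ℝ := a 0 ^ 2 + a 1 ^ 2 + a 2 ^ 2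

/-- the generator R of rotations about the x₃-axis -/
def Rv (a : V3) : V3 := ![-a 1, a 0, 0]

/-- the rotation e^{αR} about the x₃-axis -/
def rotZ (α : ℝ) (a : V3) : V3 :=
  ![Real.cos α * a 0 - Real.sin α * a 1, Real.sin α * a 0 + Real.cos α * a 1, a 2]

def kHat : V3 := ![0, 0, 1]
def negkHat : V3 := ![0, 0, -1]
def jHat : V3 := ![0, 1, 0]

/-- first component of the harmonic map profile -/
def h1f (m : ℕ) (r : ℝ) : ℝ := 2 / (r ^ (m : ℤ) + r ^ (-(m : ℤ)))

/-- third component of the harmonic map profile -/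
def h3f (m : ℕ) (r : ℝ) : ℝ := (r ^ (m : ℤ) - r ^ (-(m : ℤ))) / (r ^ (m : ℤ) + r ^ (-(m : ℤ)))

/-- the harmonic map profile h -/
def hProf (m : ℕ) (r : ℝ) : V3 := ![h1f m r, 0, h3f m r]

/-- the r-derivative of the harmonic map profile -/
def dhProf (m : ℕ) (r : ℝ) : V3 :=
  ![-((m : ℝ) / r) * h1f m r * h3f m r, 0, ((m : ℝ) / r) * (h1f m r) ^ 2]

/-- profile of the harmonic map e^{(mθ+α)R} h(r/s) -/
def harmP (m : ℕ) (s α : ℝ) (r : ℝ) : V3 := rotZ α (hProf m (r / s))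

/-- its r-derivative -/
def dharmP (m : ℕ) (s α : ℝ) (r : ℝ) : V3 := fun i => (1 / s) * rotZ α (dhProf m (r / s)) i

/-- `v` is locally absolutely continuous on (0,∞), with a.e. derivative `dv`. -/
def LocAC (v dv : ℝ → V3) : Prop :=
  (∀ a b : ℝ, 0 < a → a ≤ b → ∀ i, IntervalIntegrable (fun r => dv r i) volume a b) ∧
  (∀ a b : ℝ, 0 < a → a ≤ b → ∀ i, v b i - v a i = ∫ r in a..b, dv r i)

/-- energy density (w.r.t. dr) of the m-equivariant map with profile (v,dv) -/
def eDen (m : ℕ) (v dv : ℝ → V3) (r : ℝ) : ℝ :=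
  (nsq3 (dv r) + ((m : ℝ) ^ 2 / r ^ 2) * ((v r 0) ^ 2 + (v r 1) ^ 2)) * r

/-- the energy E(u) = (1/2)∫|∇u|² of the m-equivariant map with profile (v,dv) -/
def energy (m : ℕ) (v dv : ℝ → V3) : ℝ := π * ∫ r in Ioi (0:ℝ), eDen m v dv r

/-- membership in the class Σ_m, expressed in terms of the profile (v,dv) -/
def InSigma (m : ℕ) (v dv : ℝ → V3) : Prop :=
  LocAC v dv ∧ (∀ r ∈ Ioi (0:ℝ), nsq3 (v r) = 1) ∧
  IntegrableOn (eDen m v dv) (Ioi (0:ℝ)) ∧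
  Tendsto v (nhdsWithin 0 (Ioi 0)) (nhds negkHat) ∧
  Tendsto v atTop (nhds kHat)

/-- squared Ḣ¹(ℝ²) distance between the m-equivariant maps with profiles (v,dv), (w,dw) -/
def dH1sq (m : ℕ) (v dv w dw : ℝ → V3) : ℝ :=
  2 * π * ∫ r in Ioi (0:ℝ),
    (nsq3 (fun i => dv r i - dw r i)
      + ((m : ℝ) ^ 2 / r ^ 2) * ((v r 0 - w r 0) ^ 2 + (v r 1 - w r 1) ^ 2)) * r

/-- Ḣ¹(ℝ²) distance -/
def dH1 (m : ℕ) (v dv w dw : ℝ → V3) : ℝ := Real.sqrt (dH1sq m v dv w dw)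

/-- the polar angle of a point of ℝ² -/
def angleOf (x : V2) : ℝ := Complex.arg ⟨x 0, x 1⟩

/-- the radius of a point of ℝ² -/
def radOf (x : V2) : ℝ := Real.sqrt ((x 0) ^ 2 + (x 1) ^ 2)

/-- the m-equivariant map u(r,θ) = e^{mθR} v(r) -/
def eqMap (m : ℕ) (v : ℝ → V3) (x : V2) : V3 := rotZ ((m : ℝ) * angleOf x) (v (radOf x))

/-- the spatial gradient ∂_j u of the m-equivariant map with profile (v,dv) -/
def eqGrad (m : ℕ) (v dv : ℝ → V3) (x : V2) (j : Fin 2) : V3 :=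
  rotZ ((m : ℝ) * angleOf x) (fun i =>
    (x j / radOf x) * dv (radOf x) i
      + ((m : ℝ) * (if j = 0 then -(x 1) else x 0) / radOf x ^ 2) * Rv (v (radOf x)) i)

/-- weak (distributional) form of the Schrödinger map equation ∂ₜu = u × Δu on the time
interval I, for the m-equivariant map with time-dependent profile (v,dv):
∫∫ { u·φ_t - Σ_j (u × ∂_j u)·∂_j φ } dx dt = 0 for all C¹ compactly supported φ. -/
def WeakSM (m : ℕ) (I : Set ℝ) (v dv : ℝ → ℝ → V3) : Prop :=
  ∀ φ : ℝ → V2 → V3,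
    (∀ i, ContDiff ℝ 1 (fun q : ℝ × V2 => φ q.1 q.2 i)) →
    (∀ i, HasCompactSupport (fun q : ℝ × V2 => φ q.1 q.2 i)) →
    (∀ t, t ∉ interior I → ∀ x, φ t x = 0) →
    (∫ t in I, ∫ x : V2,
      (dot3 (eqMap m (v t) x) (fun i => deriv (fun τ => φ τ x i) t)
        - ∑ j : Fin 2, dot3 (cross3 (eqMap m (v t) x) (eqGrad m (v t) (dv t) x j))
            (fun i => fderiv ℝ (fun y => φ t y i) x (Pi.single j 1)))) = 0

/-- continuity in t of the map t ↦ u(t) with respect to the Ḣ¹ distance, on I -/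
def H1Cont (m : ℕ) (I : Set ℝ) (v dv : ℝ → ℝ → V3) : Prop :=
  ∀ t₀ ∈ I, ∀ ε > (0:ℝ), ∃ η > (0:ℝ), ∀ t ∈ I, |t - t₀| < η →
    dH1 m (v t) (dv t) (v t₀) (dv t₀) < ε

/-- a weak solution of the Schrödinger map equation in the class C(I; Σ_m), with
initial profile v₀ -/
def SolClass (m : ℕ) (I : Set ℝ) (v dv : ℝ → ℝ → V3) (v₀ : ℝ → V3) : Prop :=
  (∀ r ∈ Ioi (0:ℝ), v 0 r = v₀ r) ∧ WeakSM m I v dv ∧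
  (∀ t ∈ I, InSigma m (v t) (dv t)) ∧ H1Cont m I v dv

/-- the profile of Δu for the m-equivariant map u with profile (v,dv,ddv):
Δu = e^{mθR}( v_rr + v_r/r + (m²/r²) R² v ) -/
def lapP (m : ℕ) (v dv ddv : ℝ → V3) (r : ℝ) : V3 := fun i =>
  ddv r i + dv r i / r + ((m : ℝ) ^ 2 / r ^ 2) * (![-(v r 0), -(v r 1), 0] : V3) i

/-- squared Ḣ² distance (via the Laplacian) -/
def dH2sq (m : ℕ) (v dv ddv w dw ddw : ℝ → V3) : ℝ :=
  2 * π * ∫ r in Ioi (0:ℝ), nsq3 (fun i => lapP m v dv ddv r i - lapP m w dw ddw r i) * r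

/-! Writing `a = r ^ m`, the profile is `h₁ = 2 / (a + a⁻¹)`, `h₃ = (a - a⁻¹) / (a + a⁻¹)`, so
`h₁² + h₃² = 1` and `r h₃' = m h₁²`. Hence `r² V = m (m - 2 h₃)` lies between `m (m - 2)` and
`m (m + 2)`, and since `r V = m (m - 2 h₃) / r`,
`-r² (r V)' = m (m - 2 h₃) + 2 m r h₃' = m (m - 2 h₃ + 2 m h₁²) ≥ m (m - 2)`. -/

lemma add_inv_ne_zero {a : ℝ} (ha : a ≠ 0) : a + a⁻¹ ≠ 0 := by
  have : a * (a + a⁻¹) = a ^ 2 + 1 := by field_simp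
  intro h
  rw [h, mul_zero] at this
  nlinarith [sq_nonneg a]

section profile

variable {m : ℕ} {r : ℝ}

lemma h1f_sq_add_h3f_sq (hr : r ≠ 0) : h1f m r ^ 2 + h3f m r ^ 2 = 1 := by
  have hD := add_inv_ne_zero (zpow_ne_zero (m : ℤ) hr)
  rw [h1f, h3f, zpow_neg]
  field_simp
  ring

lemma abs_h3f_le_one (hr : r ≠ 0) : |h3f m r| ≤ 1 := by
  rw [← sq_le_one_iff_abs_le_one, ← h1f_sq_add_h3f_sq (m := m) hr]
  exact le_add_of_nonneg_left (sq_nonneg _)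

lemma hasDerivAt_h3f (hr : r ≠ 0) : HasDerivAt (h3f m) (m / r * h1f m r ^ 2) r := by
  have hD : r ^ (m : ℤ) + r ^ (-(m : ℤ)) ≠ 0 := by
    rw [zpow_neg]; exact add_inv_ne_zero (zpow_ne_zero _ hr)
  have hu := hasDerivAt_zpow (m : ℤ) r (Or.inl hr)
  have hv := hasDerivAt_zpow (-(m : ℤ)) r (Or.inl hr)
  refine ((hu.sub hv).div (hu.add hv) hD).congr_deriv ?_
  simp only [Pi.add_apply, Pi.sub_apply]
  rw [h1f, zpow_sub_one₀ hr, zpow_sub_one₀ hr, zpow_neg]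
  push_cast
  field_simp
  ring

lemma hasDerivAt_mul_potential (hr : r ≠ 0) :
    HasDerivAt (fun ρ => ρ * ((m / ρ ^ 2) * (m - 2 * h3f m ρ)))
      (-(m / r ^ 2) * (m - 2 * h3f m r + 2 * m * h1f m r ^ 2)) r := by
  have hq : HasDerivAt (fun ρ : ℝ => (m : ℝ) / ρ ^ 2) (-(2 * m / r ^ 3)) r := by
    refine ((hasDerivAt_const r (m : ℝ)).div (hasDerivAt_pow 2 r) (pow_ne_zero 2 hr)).congr_deriv ?_
    field_simp
    ring
  refine ((hasDerivAt_id r).mul (hq.mul ((hasDerivAt_const r (m : ℝ)).sub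
    ((hasDerivAt_h3f hr).const_mul 2)))).congr_deriv ?_
  simp only [Pi.mul_apply, Pi.sub_apply, id_eq]
  field_simp
  ring

end profile

/-- **The linearized potential is positive and repulsive.** For m ≥ 2 and
V(r) := (m/r²)(m − 2h₃(r)): (m+1)² ≥ 1 + r²V(r) ≥ (m−1)² ≥ 1 (in particular
0 ≤ r²V(r)), and 1 − r²(rV(r))′ = 1 + m(m − 2h₃ + 2m h₁²) ≥ 1 + m(m−2) ≥ 1,
so the potential (1 + m² − 2m h₃(r))/r² = 1/r² + V(r) satisfies the positivity
and repulsivity conditions with ν = 1. -/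
theorem statement15 (m : ℕ) (hm : 2 ≤ m) (r : ℝ) (hr : 0 < r) :
    (((m : ℝ) + 1) ^ 2 ≥ 1 + r ^ 2 * (((m : ℝ) / r ^ 2) * ((m : ℝ) - 2 * h3f m r)) ∧
     1 + r ^ 2 * (((m : ℝ) / r ^ 2) * ((m : ℝ) - 2 * h3f m r)) ≥ ((m : ℝ) - 1) ^ 2 ∧
     ((m : ℝ) - 1) ^ 2 ≥ 1 ∧
     0 ≤ r ^ 2 * (((m : ℝ) / r ^ 2) * ((m : ℝ) - 2 * h3f m r))) ∧
    (1 - r ^ 2 * deriv (fun ρ => ρ * (((m : ℝ) / ρ ^ 2) * ((m : ℝ) - 2 * h3f m ρ))) r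
        = 1 + (m : ℝ) * ((m : ℝ) - 2 * h3f m r + 2 * (m : ℝ) * (h1f m r) ^ 2) ∧
     1 + (m : ℝ) * ((m : ℝ) - 2 * h3f m r + 2 * (m : ℝ) * (h1f m r) ^ 2)
        ≥ 1 + (m : ℝ) * ((m : ℝ) - 2) ∧
     1 + (m : ℝ) * ((m : ℝ) - 2) ≥ 1) := by
  have hM : (2 : ℝ) ≤ m := by exact_mod_cast hm
  obtain ⟨h3_ge, h3_le⟩ := abs_le.mp (abs_h3f_le_one (m := m) hr.ne')
  have hrV : r ^ 2 * ((m / r ^ 2) * (m - 2 * h3f m r)) = m * (m - 2 * h3f m r) := by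
    field_simp
  refine ⟨⟨?_, ?_, ?_, ?_⟩, ?_, ?_, ?_⟩
  · rw [hrV]; nlinarith
  · rw [hrV]; nlinarith
  · nlinarith
  · rw [hrV]; nlinarith
  · rw [(hasDerivAt_mul_potential hr.ne').deriv]
    field_simp
    ring
  · have : 0 ≤ (m : ℝ) * (1 - h3f m r) := mul_nonneg (by positivity) (by linarith)
    nlinarith [sq_nonneg (m * h1f m r)]
  · nlinarith

end
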